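/- Let (W,g) be a finite-dimensional real vector space with a nondegenerate symmetric bilinear form, and let 𝒥 ∈ End(W ⊕ ℝ) satisfy 𝒥² = −Id and be skew-symmetric with respect to g + g_can. Then there exist unique X₊ ∈ W and J₊ ∈ End(W) such that 𝒥(w,t) = (J₊w + tX₊, −g(X₊,w)) for all (w,t) ∈ W ⊕ ℝ; moreover g(X₊,X₊) = 1, J₊ is g-skew-symmetric, J₊X₊ = 0 and J₊² = −id_W + g(·,X₊)X₊ (so J₊ restricts to a complex structure on the g-orthogonal complement of X₊). -/
import Mathlib


/-- The bilinear form `g + g_can` on `W ⊕ ℝ`: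
`(g+g_can)((w,s),(w',t)) = g(w,w') + st`. -/
noncomputable def sphW {W : Type*} [AddCommGroup W] [Module ℝ W]
    (g : LinearMap.BilinForm ℝ W) (p q : W × ℝ) : ℝ :=
  g p.1 q.1 + p.2 * q.2

/-- Structure lemma used in Proposition 4.2 i): a `(g+g_can)`-skew-symmetric complex
structure `𝒥` on `W ⊕ ℝ` has the form `𝒥(w,t) = (J₊w + tX₊, −g(X₊,w))` for unique
`X₊ ∈ W`, `J₊ ∈ End(W)`, with `g(X₊,X₊) = 1`, `J₊` `g`-skew-symmetric, `J₊X₊ = 0` and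
`J₊² = −id + g(·,X₊)X₊`. -/
theorem stmt_5 {W : Type*} [AddCommGroup W] [Module ℝ W] [FiniteDimensional ℝ W]
    (g : LinearMap.BilinForm ℝ W)
    (hgsymm : ∀ x y, g x y = g y x)
    (hgnd : ∀ x, (∀ y, g x y = 0) → x = 0)
    (J : (W × ℝ) →ₗ[ℝ] (W × ℝ))
    (hJ2 : ∀ p, J (J p) = -p)
    (hJskew : ∀ p q, sphW g (J p) q = - sphW g p (J q)) :
    ∃ (Xp : W) (Jp : W →ₗ[ℝ] W),
      (∀ (w : W) (t : ℝ), J (w, t) = (Jp w + t • Xp, -(g Xp w))) ∧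
      (∀ (X' : W) (J' : W →ₗ[ℝ] W),
        (∀ (w : W) (t : ℝ), J (w, t) = (J' w + t • X', -(g X' w))) →
        X' = Xp ∧ J' = Jp) ∧
      g Xp Xp = 1 ∧
      (∀ x y, g (Jp x) y = - g x (Jp y)) ∧
      Jp Xp = 0 ∧
      (∀ w, Jp (Jp w) = -w + g w Xp • Xp) := by
  set Xp : W := (J (0, 1)).1 with hXp
  set Jp : W →ₗ[ℝ] W :=
    (LinearMap.fst ℝ W ℝ).comp (J.comp (LinearMap.inl ℝ W ℝ)) with hJp
  have hJpapp : ∀ w : W, Jp w = (J (w, 0)).1 := fun w => rfl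
  -- second component of J(0,1) is 0
  have hc : (J (0, 1)).2 = 0 := by
    have := hJskew (0, 1) (0, 1)
    simp [sphW] at this
    linarith
  -- second component of J(w,0) is -g Xp w
  have hphi : ∀ w : W, (J (w, 0)).2 = -(g Xp w) := by
    intro w
    have h1 := hJskew (w, 0) (0, 1)
    simp [sphW] at h1
    rw [h1, hgsymm]
  -- main formula
  have hform : ∀ (w : W) (t : ℝ), J (w, t) = (Jp w + t • Xp, -(g Xp w)) := by
    intro w t
    have hsplit : (w, t) = (w, (0:ℝ)) + t • ((0:W), (1:ℝ)) := by
      simp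
    rw [hsplit, map_add, map_smul]
    ext
    · simp [hJpapp, hXp]
    · simp [hphi w, hc]
  -- J(Xp, 0) computation from J² = -1
  have hJX : J (Xp, 0) = (0, -1) := by
    have h1 : J (J (0, 1)) = -(0, 1) := hJ2 (0, 1)
    have h2 : J (0, 1) = (Xp, (0:ℝ)) := by
      ext
      · rfl
      · exact hc
    rw [h2] at h1
    rw [h1]; ext <;> simp
  have hgXX : g Xp Xp = 1 := by
    have := congrArg Prod.snd (hform Xp 0)
    simp [hJX] at this
    linarith
  have hJpX : Jp Xp = 0 := by
    have := congrArg Prod.fst (hform Xp 0)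
    simp [hJX] at this
    simpa using this.symm
  have hskewp : ∀ x y, g (Jp x) y = - g x (Jp y) := by
    intro x y
    have := hJskew (x, 0) (y, 0)
    simpa [sphW, hJpapp] using this
  have hsq : ∀ w, Jp (Jp w) = -w + g w Xp • Xp := by
    intro w
    have h1 : J (J (w, 0)) = -(w, (0:ℝ)) := hJ2 (w, 0)
    have h2 : J (w, 0) = (Jp w + (0:ℝ) • Xp, -(g Xp w)) := hform w 0
    rw [h2] at h1
    have h3 : (Jp w + (0:ℝ) • Xp, -(g Xp w)) = (Jp w, (0:ℝ)) + (-(g Xp w)) • ((0:W), (1:ℝ)) := by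
      simp
    rw [h3, map_add, map_smul] at h1
    have h4 := congrArg Prod.fst h1
    have h5 : J ((0:W), (1:ℝ)) = (Xp, (0:ℝ)) := by
      ext
      · rfl
      · exact hc
    rw [h5] at h4
    simp [hform (Jp w) 0] at h4
    rw [hgsymm w Xp, ← h4]
    abel
  exact ⟨Xp, Jp, hform,
    fun X' J' h => by
      constructor
      · have h1 := congrArg Prod.fst (h 0 1)
        simp at h1
        rw [hXp, ← h1]
      · ext w
        have h1 := congrArg Prod.fst (h w 0)
        simp at h1
        rw [← hJpapp] at h1
        exact h1.symm,
    hgXX, hskewp, hJpX, hsq⟩
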